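/- Let (S_1,m_1), ..., (S_n,m_n) be multisets in the field F with 0 ∈ S_i and m_i(0) = 1 for every i, and let H_1, ..., H_k be affine hyperplanes in F^n (each H_j given as the zero set of a polynomial ℓ_j of total degree 1). Suppose that every point s ∈ S \ {0} lies on at least m_1(s_1) + ⋯ + m_n(s_n) − n + 1 of the hyperplanes, and that the point 0 lies on none of them (ℓ_j(0) ≠ 0 for all j). Then k ≥ d(S_1) + d(S_2) + ⋯ + d(S_n) − n. -/

import Mathlib

open MvPolynomial

/-- The Taylor coefficient `f_u(s)`: the coefficient of `x^u` in `f(x + s)`. -/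
noncomputable def taylorCoeff {F : Type*} [Field F] {n : ℕ}
    (f : MvPolynomial (Fin n) F) (s : Fin n → F) (u : Fin n →₀ ℕ) : F :=
  coeff u (aeval (fun i => X i + C (s i)) f)

/-- Membership in the ideal `I(s, w)`: all Taylor coefficients `f_u(s)` with
`u < w` (componentwise) vanish. -/
def memPointIdeal {F : Type*} [Field F] {n : ℕ}
    (f : MvPolynomial (Fin n) F) (s : Fin n → F) (w : Fin n → ℕ) : Prop :=
  ∀ u : Fin n →₀ ℕ, (∀ i, u i < w i) → taylorCoeff f s u = 0

/-- The polynomial `g_i(x_i) = ∏_{s ∈ S_i} (x_i - s)^{m_i(s)}`. -/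
noncomputable def gPoly {F : Type*} [Field F] {n : ℕ}
    (S : Fin n → Finset F) (m : Fin n → F → ℕ) (i : Fin n) : MvPolynomial (Fin n) F :=
  ∏ s ∈ S i, (X i - C s) ^ m i s

/-- The size `d_i = Σ_{s ∈ S_i} m_i(s)` of the multiset `(S_i, m_i)`. -/
def dSize {F : Type*} {n : ℕ} (S : Fin n → Finset F) (m : Fin n → F → ℕ) (i : Fin n) : ℕ :=
  ∑ s ∈ S i, m i s

/-!
Let `P = ∏ ℓ_j`, of degree at most `k`. It vanishes to order `m(s)` (all Taylor coefficients
`f_u(s)` with `u < m(s)` vanish) at every `s ∈ S \ {0}`, because at least `∑ m_i(s_i) - n + 1`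
of its factors vanish there, and `P(0) ≠ 0`.
Let `L = ∏_i ∏_{t ∈ S_i \ {0}} (x_i - t)^{m_i(t)}`, monic of degree `D = ∑ (d(S_i) - 1)`.
If `deg P < D`, reduce `P` modulo the `g_i` to `P'` of degree `< D` with `deg_{x_i} P' < d(S_i)`.
Then `Q = P(0) L - L(0) P'` vanishes to order `m(s)` at every `s ∈ S`, has `deg_{x_i} Q < d(S_i)`,
and its coefficient at the leading monomial of `L` is `P(0) ≠ 0`. This contradicts the
multiplicity version of the Alon–Füredi vanishing lemma, proved by induction on `n`: the
Taylor coefficients of such a polynomial in `x_0` at `a ∈ S_0` of order `< m_0(a)` vanish by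
induction, so as a polynomial in `x_0` it has `d(S_0)` roots counted with multiplicity, more
than its degree.
-/

open MonomialOrder

namespace Polynomial

variable {R : Type*} [CommRing R]

theorem X_sub_C_pow_dvd_iff_X_pow_dvd_taylor {p : R[X]} {a : R} {k : ℕ} :
    (X - C a) ^ k ∣ p ↔ X ^ k ∣ taylor a p := by
  rw [← map_dvd_iff (taylorEquiv a), map_pow, map_sub]
  change (taylor a X - taylor a (C a)) ^ k ∣ taylor a p ↔ _
  rw [taylor_X, taylor_C, add_sub_cancel_right]

theorem eq_zero_of_natDegree_lt_sum_of_X_sub_C_pow_dvd [IsDomain R] {ι : Type*} {p : R[X]}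
    (S : Finset ι) (a : ι → R) (ha : Set.InjOn a S) (k : ι → ℕ)
    (hdvd : ∀ i ∈ S, (X - C (a i)) ^ k i ∣ p) (hdeg : p.natDegree < ∑ i ∈ S, k i) :
    p = 0 := by
  classical
  by_contra hp
  have hcount : ∑ i ∈ S, k i ≤ Multiset.card p.roots :=
    calc ∑ i ∈ S, k i ≤ ∑ i ∈ S, p.roots.count (a i) :=
          Finset.sum_le_sum fun i hi => by
            rw [count_roots, le_rootMultiplicity_iff hp]; exact hdvd i hi
      _ = ∑ b ∈ S.image a, p.roots.count b := (Finset.sum_image (f := p.roots.count) ha).symm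
      _ ≤ ∑ b ∈ S.image a ∪ p.roots.toFinset, p.roots.count b :=
          Finset.sum_le_sum_of_subset Finset.subset_union_left
      _ = Multiset.card p.roots :=
          Multiset.sum_count_eq_card fun b hb => Finset.mem_union_right _ (by simpa using hb)
  exact (hdeg.trans_le hcount).not_ge (card_roots' p)

end Polynomial

theorem MvPolynomial.degreeOf_coeff_taylor_le {σ R : Type*} [CommSemiring R] (j : σ) (a : R)
    (p : Polynomial (MvPolynomial σ R)) {B : ℕ} (hp : ∀ e, degreeOf j (p.coeff e) ≤ B) (c : ℕ) :
    degreeOf j ((Polynomial.taylor (C a) p).coeff c) ≤ B := by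
  rw [Polynomial.taylor_coeff, Polynomial.eval_eq_sum_range]
  refine (degreeOf_sum_le _ _ _).trans (Finset.sup_le fun e _ => ?_)
  rw [Polynomial.hasseDeriv_coeff, ← map_natCast C, ← map_pow, mul_comm, ← mul_assoc, ← map_mul]
  exact (degreeOf_C_mul_le _ _ _).trans (hp _)

section

variable {F : Type*} [Field F] {n : ℕ}

theorem taylorCoeff_zero (f : MvPolynomial (Fin n) F) (s : Fin n → F) :
    taylorCoeff f s 0 = eval s f := by
  rw [taylorCoeff, ← constantCoeff_eq]
  induction f using MvPolynomial.induction_on with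
  | C a => simp
  | add p q hp hq => rw [map_add, map_add, hp, hq, map_add]
  | mul_X p i hp =>
    rw [map_mul, map_mul, hp, aeval_X, map_add, constantCoeff_X, constantCoeff_C, zero_add,
      map_mul, eval_X]

noncomputable def pointIdeal (s : Fin n → F) (w : Fin n → ℕ) : Ideal (MvPolynomial (Fin n) F) :=
  (Ideal.span ((fun u => monomial u 1) '' Set.range fun i => Finsupp.single i (w i))).comap
    (aeval fun i => X i + C (s i))

theorem mem_pointIdeal {f : MvPolynomial (Fin n) F} {s : Fin n → F} {w : Fin n → ℕ} :
    f ∈ pointIdeal s w ↔ memPointIdeal f s w := by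
  simp only [pointIdeal, Ideal.mem_comap, mem_ideal_span_monomial_image, Set.exists_range_iff,
    Finsupp.single_le_iff, memPointIdeal, taylorCoeff]
  refine ⟨fun h u hu => ?_, fun h u hu => ?_⟩
  · by_contra hne
    obtain ⟨i, hi⟩ := h u (mem_support_iff.mpr hne)
    exact (hu i).not_ge hi
  · by_contra! hlt
    exact mem_support_iff.mp hu (h u hlt)

theorem X_sub_C_pow_mem_pointIdeal (s : Fin n → F) (w : Fin n → ℕ) (i : Fin n) :
    (X i - C (s i)) ^ w i ∈ pointIdeal s w := by
  rw [pointIdeal, Ideal.mem_comap, map_pow, map_sub, aeval_X, aeval_C, algebraMap_eq,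
    add_sub_cancel_right, X_pow_eq_monomial]
  exact Ideal.subset_span ⟨_, ⟨i, rfl⟩, rfl⟩

theorem mem_pointIdeal_one {f : MvPolynomial (Fin n) F} {s : Fin n → F} :
    f ∈ pointIdeal s 1 ↔ eval s f = 0 := by
  have hu : ∀ u : Fin n →₀ ℕ, (∀ i, u i < (1 : Fin n → ℕ) i) ↔ u = 0 := fun u => by
    simp [Finsupp.ext_iff]
  simp only [mem_pointIdeal, memPointIdeal, hu, forall_eq, taylorCoeff_zero]

theorem prod_mem_pointIdeal {ι : Type*} {A : Finset ι} {f : ι → MvPolynomial (Fin n) F}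
    {s : Fin n → F} {w : Fin n → ℕ} (hf : ∀ j ∈ A, eval s (f j) = 0)
    (hw : ∑ i, w i - n < A.card) : ∏ j ∈ A, f j ∈ pointIdeal s w := by
  rw [mem_pointIdeal]
  intro u hu
  have hdeg : u.degree < A.card := by
    have : ∑ i, (u i + 1) ≤ ∑ i, w i := Finset.sum_le_sum fun i _ => hu i
    rw [Finset.sum_add_distrib, Finset.sum_const, Finset.card_univ, Fintype.card_fin,
      smul_eq_mul, mul_one] at this
    rw [Finsupp.degree_eq_sum]
    omega
  -- After the shift every factor lacks a constant term, so the product has order `≥ #A`.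
  set g := fun j => aeval (fun i => X i + C (s i)) (f j)
  have hg : ∀ j ∈ A, 1 ≤ (coeToMvPowerSeries.ringHom (g j)).order := fun j hj => by
    rw [MvPowerSeries.one_le_order_iff_constCoeff_eq_zero,
      ← MvPowerSeries.coeff_zero_eq_constantCoeff_apply, coeToMvPowerSeries.ringHom_apply,
      coeff_coe, ← taylorCoeff, taylorCoeff_zero, hf j hj]
  rw [taylorCoeff, map_prod, ← coeff_coe, ← coeToMvPowerSeries.ringHom_apply, map_prod]
  refine MvPowerSeries.coeff_of_lt_order ?_
  calc (u.degree : ℕ∞) < A.card := by exact_mod_cast hdeg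
    _ = ∑ j ∈ A, 1 := by simp
    _ ≤ ∑ j ∈ A, (coeToMvPowerSeries.ringHom (g j)).order := Finset.sum_le_sum hg
    _ ≤ _ := MvPowerSeries.le_order_prod _ _

theorem monic_gPoly (mo : MonomialOrder (Fin n)) (S : Fin n → Finset F) (m : Fin n → F → ℕ)
    (i : Fin n) : mo.Monic (gPoly S m i) :=
  MonomialOrder.Monic.prod fun s _ => (mo.monic_X_sub_C i s).pow

theorem degree_gPoly (mo : MonomialOrder (Fin n)) (S : Fin n → Finset F) (m : Fin n → F → ℕ)
    (i : Fin n) : mo.degree (gPoly S m i) = Finsupp.single i (dSize S m i) := by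
  rw [gPoly, mo.degree_prod fun s _ => ((mo.monic_X_sub_C i s).pow).ne_zero, dSize,
    Finsupp.single_finsetSum]
  refine Finset.sum_congr rfl fun s _ => ?_
  rw [mo.degree_pow, mo.degree_X_sub_C, Finsupp.smul_single, smul_eq_mul, mul_one]

theorem degreeOf_gPoly_le (S : Fin n → Finset F) (m : Fin n → F → ℕ) (i j : Fin n) :
    degreeOf j (gPoly S m i) ≤ Finsupp.single i (dSize S m i) j := by
  have hlin : ∀ s, degreeOf j (X i - C s : MvPolynomial (Fin n) F) ≤ Finsupp.single i 1 j :=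
    fun s => (degreeOf_sub_le _ _ _).trans <| by
      classical
      rw [degreeOf_X, degreeOf_C, Finsupp.single_apply, max_eq_left (Nat.zero_le _)]
      exact (if_congr eq_comm rfl rfl).le
  calc degreeOf j (gPoly S m i) ≤ ∑ s ∈ S i, m i s * Finsupp.single i 1 j :=
        (degreeOf_prod_le _ _ _).trans <| Finset.sum_le_sum fun s _ =>
          (degreeOf_pow_le _ _ _).trans (Nat.mul_le_mul_left _ (hlin s))
    _ = Finsupp.single i (dSize S m i) j := by
      rw [← Finset.sum_mul, ← smul_eq_mul, ← Finsupp.smul_apply, Finsupp.smul_single, smul_eq_mul,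
        mul_one, dSize]

theorem gPoly_mem_pointIdeal {S : Fin n → Finset F} {m : Fin n → F → ℕ} {s : Fin n → F}
    {i : Fin n} (hs : s i ∈ S i) : gPoly S m i ∈ pointIdeal s fun j => m j (s j) :=
  Ideal.mem_of_dvd _ (Finset.dvd_prod_of_mem _ hs) (X_sub_C_pow_mem_pointIdeal s _ i)

theorem span_gPoly_le_pointIdeal {S : Fin n → Finset F} {m : Fin n → F → ℕ} {s : Fin n → F}
    (hs : ∀ i, s i ∈ S i) :
    Ideal.span (Set.range (gPoly S m)) ≤ pointIdeal s fun j => m j (s j) :=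
  Ideal.span_le.mpr (Set.range_subset_iff.mpr fun i => gPoly_mem_pointIdeal (hs i))

theorem exists_reduced_sub_mem_span_gPoly (S : Fin n → Finset F) (m : Fin n → F → ℕ)
    (hd : ∀ i, 0 < dSize S m i) (f : MvPolynomial (Fin n) F) :
    ∃ r, f - r ∈ Ideal.span (Set.range (gPoly S m)) ∧ r.totalDegree ≤ f.totalDegree ∧
      ∀ i, degreeOf i r < dSize S m i := by
  obtain ⟨b, r, hf, hb, hr⟩ := degLex.div (b := gPoly S m)
    (fun i => (monic_gPoly degLex S m i).leadingCoeff_eq_one ▸ isUnit_one) f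
  rw [Finsupp.linearCombination_apply,
    Finsupp.sum_fintype _ _ fun i => zero_smul _ (gPoly S m i)] at hf
  have hquot : f - r = ∑ i, b i • gPoly S m i := by rw [hf, add_sub_cancel_right]
  refine ⟨r, ?_, ?_, fun i => ?_⟩
  · rw [hquot]
    exact Ideal.sum_mem _ fun i _ => Ideal.mul_mem_left _ _ (Ideal.subset_span ⟨i, rfl⟩)
  · have hsum : (∑ i, b i • gPoly S m i).totalDegree ≤ f.totalDegree :=
      (totalDegree_finsetSum _ _).trans <| Finset.sup_le fun i _ => by
        rw [smul_eq_mul, mul_comm]; exact degLex_totalDegree_monotone (hb i)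
    rw [← sub_sub_cancel f r, hquot]
    exact (totalDegree_sub _ _).trans (max_le le_rfl hsum)
  · rw [degreeOf_lt_iff (hd i)]
    intro u hu
    simpa [degree_gPoly, Finsupp.single_le_iff] using hr u hu i

theorem finSuccEquiv_aeval_X_add_C (a : F) (s : Fin n → F) (r : MvPolynomial (Fin (n + 1)) F) :
    finSuccEquiv F n (aeval (fun i => X i + C ((Fin.cons a s : Fin (n + 1) → F) i)) r) =
      Polynomial.map (aeval fun i => X i + C (s i) : MvPolynomial (Fin n) F →ₐ[F] _).toRingHom
        (Polynomial.taylor (C a) (finSuccEquiv F n r)) := by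
  let φ : MvPolynomial (Fin (n + 1)) F →ₐ[F] Polynomial (MvPolynomial (Fin n) F) :=
    (Polynomial.mapAlgHom (aeval fun i => X i + C (s i))).comp
      (((Polynomial.taylorAlgHom (C a : MvPolynomial (Fin n) F)).restrictScalars F).comp
        (finSuccEquiv F n).toAlgHom)
  change ((finSuccEquiv F n).toAlgHom.comp (aeval _)) r = φ r
  congr 1
  refine algHom_ext fun i => Fin.cases ?_ (fun j => ?_) i
  all_goals simp [φ, finSuccEquiv_apply]

theorem taylorCoeff_cons (r : MvPolynomial (Fin (n + 1)) F) (a : F) (s : Fin n → F) (c : ℕ)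
    (u : Fin n →₀ ℕ) :
    taylorCoeff r (Fin.cons a s) (Finsupp.cons c u) =
      taylorCoeff ((Polynomial.taylor (C a) (finSuccEquiv F n r)).coeff c) s u := by
  rw [taylorCoeff, ← finSuccEquiv_coeff_coeff, finSuccEquiv_aeval_X_add_C, Polynomial.coeff_map]
  rfl

theorem eq_zero_of_forall_memPointIdeal (S : Fin n → Finset F) (m : Fin n → F → ℕ)
    (r : MvPolynomial (Fin n) F) (hdeg : ∀ i, degreeOf i r < dSize S m i)
    (hr : ∀ s : Fin n → F, (∀ i, s i ∈ S i) → memPointIdeal r s fun i => m i (s i)) : r = 0 := by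
  induction n with
  | zero =>
    have h := hr Fin.elim0 (fun i => i.elim0) 0 fun i => i.elim0
    rw [taylorCoeff_zero, eq_C_of_isEmpty r, eval_C] at h
    rw [eq_C_of_isEmpty r, h, C_0]
  | succ n ih =>
    set q := finSuccEquiv F n r
    have hcoeff : ∀ a ∈ S 0, ∀ c < m 0 a, (Polynomial.taylor (C a) q).coeff c = 0 := by
      intro a ha c hc
      refine ih (fun j => S j.succ) (fun j => m j.succ) _ (fun j => ?_) fun s hs u hu => ?_
      · exact (degreeOf_coeff_taylor_le _ _ _ (degreeOf_coeff_finSuccEquiv r j) c).trans_lt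
          (hdeg j.succ)
      · rw [← taylorCoeff_cons]
        refine hr _ (Fin.cases (by simpa using ha) fun j => by simpa using hs j) _
          (Fin.cases (by simpa using hc) fun j => by simpa using hu j)
    have hdvd : ∀ a ∈ S 0, (Polynomial.X - Polynomial.C (C a)) ^ m 0 a ∣ q := fun a ha =>
      Polynomial.X_sub_C_pow_dvd_iff_X_pow_dvd_taylor.mpr
        (Polynomial.X_pow_dvd_iff.mpr (hcoeff a ha))
    have hq : q = 0 := Polynomial.eq_zero_of_natDegree_lt_sum_of_X_sub_C_pow_dvd (S 0) C
      (C_injective _ _).injOn (m 0) hdvd (by rw [natDegree_finSuccEquiv]; exact hdeg 0)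
    exact (finSuccEquiv F n).map_eq_zero_iff.mp hq

section GridPoly

noncomputable def gridPoly (S : Fin n → Finset F) (m : Fin n → F → ℕ) : MvPolynomial (Fin n) F :=
  ∏ i, gPoly S m i

variable (S : Fin n → Finset F) (m : Fin n → F → ℕ)

theorem monic_gridPoly (mo : MonomialOrder (Fin n)) : mo.Monic (gridPoly S m) :=
  MonomialOrder.Monic.prod fun i _ => monic_gPoly mo S m i

theorem totalDegree_gridPoly : (gridPoly S m).totalDegree = ∑ i, dSize S m i := by
  rw [← degree_degLexDegree, gridPoly,
    degLex.degree_prod fun i _ => (monic_gPoly degLex S m i).ne_zero, map_sum]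
  simp [degree_gPoly]

theorem coeff_degLex_degree_gridPoly_of_totalDegree_lt {f : MvPolynomial (Fin n) F}
    (hf : f.totalDegree < ∑ i, dSize S m i) : coeff (degLex.degree (gridPoly S m)) f = 0 := by
  refine coeff_eq_zero_of_totalDegree_lt ?_
  change _ < Finsupp.degree _
  rwa [degree_degLexDegree, totalDegree_gridPoly]

theorem degreeOf_gridPoly_le (j : Fin n) : degreeOf j (gridPoly S m) ≤ dSize S m j :=
  calc degreeOf j (gridPoly S m) ≤ ∑ i, Finsupp.single i (dSize S m i) j :=
        (degreeOf_prod_le _ _ _).trans (Finset.sum_le_sum fun i _ => degreeOf_gPoly_le S m i j)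
    _ = dSize S m j := by simp [Finsupp.single_apply]

variable {S m}

theorem gridPoly_mem_pointIdeal {s : Fin n → F} {i : Fin n} (hs : s i ∈ S i) :
    gridPoly S m ∈ pointIdeal s fun j => m j (s j) :=
  Ideal.mem_of_dvd _ (Finset.dvd_prod_of_mem _ (Finset.mem_univ i)) (gPoly_mem_pointIdeal hs)

end GridPoly

theorem sum_dSize_sub_le_totalDegree (S : Fin n → Finset F) (m : Fin n → F → ℕ)
    (h0S : ∀ i, (0 : F) ∈ S i) (hm0 : ∀ i, m i 0 = 1) (P : MvPolynomial (Fin n) F)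
    (hP : ∀ s : Fin n → F, (∀ i, s i ∈ S i) → s ≠ 0 → P ∈ pointIdeal s fun i => m i (s i))
    (hP0 : eval 0 P ≠ 0) :
    (∑ i, dSize S m i) - n ≤ P.totalDegree := by
  classical
  by_contra! hlt
  set S₀ : Fin n → Finset F := fun i => (S i).erase 0
  have hd : ∀ i, dSize S₀ m i + 1 = dSize S m i := fun i => by
    rw [dSize, dSize, ← hm0 i, Finset.sum_erase_add _ _ (h0S i)]
  have hd_lt : ∀ i, dSize S₀ m i < dSize S m i := fun i => hd i ▸ Nat.lt_succ_self _
  have hsum : ∑ i, dSize S₀ m i + n = ∑ i, dSize S m i := by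
    simp [← hd, Finset.sum_add_distrib]
  obtain ⟨P', hPP', hP'deg, hP'red⟩ :=
    exists_reduced_sub_mem_span_gPoly S m (fun i => (Nat.zero_le _).trans_lt (hd_lt i)) P
  set L := gridPoly S₀ m
  set Q := C (eval 0 P) * L - C (eval 0 L) * P'
  have hQ : ∀ s, (∀ i, s i ∈ S i) → memPointIdeal Q s fun i => m i (s i) := by
    intro s hs
    rw [← mem_pointIdeal]
    rcases eq_or_ne s 0 with rfl | hs0
    · have hw : (fun i => m i ((0 : Fin n → F) i)) = 1 := funext hm0
      have hP'0 := span_gPoly_le_pointIdeal hs hPP'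
      rw [hw, mem_pointIdeal_one, map_sub, sub_eq_zero] at hP'0
      rw [hw, mem_pointIdeal_one]
      simp only [Q, map_sub, map_mul, eval_C, hP'0, mul_comm, sub_self]
    · obtain ⟨i, hi⟩ := Function.ne_iff.mp hs0
      have hL : L ∈ pointIdeal s fun i => m i (s i) :=
        gridPoly_mem_pointIdeal (i := i) (Finset.mem_erase.mpr ⟨hi, hs i⟩)
      have hP' : P' ∈ pointIdeal s fun i => m i (s i) := by
        simpa using sub_mem (hP s hs hs0) (span_gPoly_le_pointIdeal hs hPP')
      exact sub_mem (Ideal.mul_mem_left _ _ hL) (Ideal.mul_mem_left _ _ hP')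
  have hQdeg : ∀ i, degreeOf i Q < dSize S m i := fun i =>
    (degreeOf_sub_le _ _ _).trans_lt <| max_lt
      ((degreeOf_C_mul_le _ _ _).trans_lt ((degreeOf_gridPoly_le S₀ m i).trans_lt (hd_lt i)))
      ((degreeOf_C_mul_le _ _ _).trans_lt (hP'red i))
  have hcoeff : coeff (degLex.degree L) Q = eval 0 P := by
    have hL1 : coeff (degLex.degree L) L = 1 := (monic_gridPoly S₀ m degLex).coeff_degree
    have hP'T : coeff (degLex.degree L) P' = 0 :=
      coeff_degLex_degree_gridPoly_of_totalDegree_lt S₀ m (by omega)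
    simp [Q, coeff_C_mul, hL1, hP'T]
  exact hP0 (by rw [← hcoeff, eq_zero_of_forall_memPointIdeal S m Q hQdeg hQ, coeff_zero])

end

theorem stmt_15_general {F : Type*} [Field F] [DecidableEq F] {n : ℕ}
    (S : Fin n → Finset F)
    (m : Fin n → F → ℕ)
    (h0S : ∀ i, (0 : F) ∈ S i) (hm0 : ∀ i, m i 0 = 1)
    (k : ℕ) (ℓ : Fin k → MvPolynomial (Fin n) F)
    (hdeg : ∀ j, (ℓ j).totalDegree = 1)
    (hcover : ∀ s : Fin n → F, (∀ i, s i ∈ S i) → s ≠ 0 →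
      (∑ i, m i (s i)) - n + 1 ≤
        (Finset.univ.filter fun j => eval s (ℓ j) = 0).card)
    (h0 : ∀ j, eval (0 : Fin n → F) (ℓ j) ≠ 0) :
    (∑ i, dSize S m i) - n ≤ k := by
  have hP : ∀ s : Fin n → F, (∀ i, s i ∈ S i) → s ≠ 0 →
      ∏ j, ℓ j ∈ pointIdeal s fun i => m i (s i) := fun s hs hs0 =>
    Ideal.mem_of_dvd _ (Finset.prod_dvd_prod_of_subset _ _ _ (Finset.filter_subset _ _))
      (prod_mem_pointIdeal (fun j hj => (Finset.mem_filter.mp hj).2)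
        (Nat.lt_of_succ_le (hcover s hs hs0)))
  have hP0 : eval 0 (∏ j, ℓ j) ≠ 0 := by
    rw [map_prod]
    exact Finset.prod_ne_zero_iff.mpr fun j _ => h0 j
  calc (∑ i, dSize S m i) - n ≤ (∏ j, ℓ j).totalDegree :=
        sum_dSize_sub_le_totalDegree S m h0S hm0 _ hP hP0
    _ ≤ ∑ j, (ℓ j).totalDegree := totalDegree_finsetProd _ _
    _ = k := by simp [hdeg]

/-- Covering discrete boxes with multiplicity (Alon–Füredi for multisets): if `0 ∈ S_i`
with `m_i(0) = 1` for every `i`, the hyperplanes `H_j = {ℓ_j = 0}` (with `deg ℓ_j = 1`)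
cover every point `s ∈ S \ {0}` at least `m_1(s_1) + ⋯ + m_n(s_n) - n + 1` times, and
none of them passes through `0`, then `k ≥ d(S_1) + ⋯ + d(S_n) - n`. -/
theorem stmt_15 {F : Type*} [Field F] [DecidableEq F] {n : ℕ} (hn : 1 ≤ n)
    (S : Fin n → Finset F) (hS : ∀ i, (S i).Nonempty)
    (m : Fin n → F → ℕ) (hm : ∀ i, ∀ s ∈ S i, 1 ≤ m i s)
    (h0S : ∀ i, (0 : F) ∈ S i) (hm0 : ∀ i, m i 0 = 1)
    (k : ℕ) (ℓ : Fin k → MvPolynomial (Fin n) F)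
    (hdeg : ∀ j, (ℓ j).totalDegree = 1)
    (hcover : ∀ s : Fin n → F, (∀ i, s i ∈ S i) → s ≠ 0 →
      (∑ i, m i (s i)) - n + 1 ≤
        (Finset.univ.filter fun j => eval s (ℓ j) = 0).card)
    (h0 : ∀ j, eval (0 : Fin n → F) (ℓ j) ≠ 0) :
    (∑ i, dSize S m i) - n ≤ k :=
  stmt_15_general S m h0S hm0 k ℓ hdeg hcover h0
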